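/- (Product-limit = IPCW for the distribution function.) For every real t ≥ 0, 1 − Ŝ_PL(t) = F̂_IPCW(t); that is, 1 − ∏_{u ≤ t} (1 − ΔN(u)/Y(u)) = (1/n) ∑_{i=1}^n D_i · 1{X_i ≤ t} / K̂(X_i−). -/

import Mathlib

/-! At an observed time `u` the failure and censoring factors multiply to
`Y(u+)/Y(u)`, so the product `n Ŝ_PL(u−) K̂(u−)` telescopes to `Y(u)`. Hence the IPCW weight
`ΔN(u) / (n K̂(u−))` of the failures at `u` equals `Ŝ_PL(u−) ΔN(u) / Y(u)`, which is the jump of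
`1 − Ŝ_PL` at `u`. -/

open Finset
open scoped Classical

noncomputable section

namespace SurvStmt

/-- The finite set of distinct observed times `{X_1, …, X_n}`. -/
def times {n : ℕ} (X : Fin n → ℝ) : Finset ℝ := Finset.image X Finset.univ

/-- `Y(t) = #{i : X_i ≥ t}`, as a real number. -/
def Yat {n : ℕ} (X : Fin n → ℝ) (t : ℝ) : ℝ :=
  ((Finset.univ.filter (fun i => t ≤ X i)).card : ℝ)

/-- `Y(t+) = #{i : X_i > t}`, as a real number. -/
def Yplus {n : ℕ} (X : Fin n → ℝ) (t : ℝ) : ℝ :=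
  ((Finset.univ.filter (fun i => t < X i)).card : ℝ)

/-- `ΔN(t) = #{i : X_i = t, D_i = 1}`, as a real number. -/
def dN {n : ℕ} (X : Fin n → ℝ) (D : Fin n → Bool) (t : ℝ) : ℝ :=
  ((Finset.univ.filter (fun i => X i = t ∧ D i = true)).card : ℝ)

/-- `ΔC(t) = #{i : X_i = t, D_i = 0}`, as a real number. -/
def dC {n : ℕ} (X : Fin n → ℝ) (D : Fin n → Bool) (t : ℝ) : ℝ :=
  ((Finset.univ.filter (fun i => X i = t ∧ D i = false)).card : ℝ)

/-- `Y†(t) = Y(t) − ΔN(t)`. -/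
def Ydag {n : ℕ} (X : Fin n → ℝ) (D : Fin n → Bool) (t : ℝ) : ℝ :=
  Yat X t - dN X D t

/-- `τ = max_i X_i`, the largest observation time (0 if there is no data). -/
def tau {n : ℕ} (X : Fin n → ℝ) : ℝ := WithBot.unbotD 0 ((times X).max)

/-- Censoring product-limit estimator `K̂(t) = ∏_{u ≤ t} (1 − ΔC(u)/Y†(u))`. -/
def Khat {n : ℕ} (X : Fin n → ℝ) (D : Fin n → Bool) (t : ℝ) : ℝ :=
  ∏ u ∈ (times X).filter (fun u => u ≤ t), (1 - dC X D u / Ydag X D u)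

/-- Left limit `K̂(t−) = ∏_{u < t} (1 − ΔC(u)/Y†(u))`. -/
def Kminus {n : ℕ} (X : Fin n → ℝ) (D : Fin n → Bool) (t : ℝ) : ℝ :=
  ∏ u ∈ (times X).filter (fun u => u < t), (1 - dC X D u / Ydag X D u)

/-- Failure product-limit estimator `Ŝ_PL(t) = ∏_{u ≤ t} (1 − ΔN(u)/Y(u))`. -/
def SPL {n : ℕ} (X : Fin n → ℝ) (D : Fin n → Bool) (t : ℝ) : ℝ :=
  ∏ u ∈ (times X).filter (fun u => u ≤ t), (1 - dN X D u / Yat X u)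

/-- Left limit `Ŝ_PL(t−) = ∏_{u < t} (1 − ΔN(u)/Y(u))`. -/
def SPLminus {n : ℕ} (X : Fin n → ℝ) (D : Fin n → Bool) (t : ℝ) : ℝ :=
  ∏ u ∈ (times X).filter (fun u => u < t), (1 - dN X D u / Yat X u)

/-- IPCW estimator `F̂_IPCW(t) = (1/n) ∑_i D_i 1{X_i ≤ t} / K̂(X_i−)`. -/
def FIPCW {n : ℕ} (X : Fin n → ℝ) (D : Fin n → Bool) (t : ℝ) : ℝ :=
  (1 / (n : ℝ)) * ∑ i : Fin n,
    (if D i = true then (1 : ℝ) else 0) * (if X i ≤ t then (1 : ℝ) else 0) / Kminus X D (X i)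

/-- IPCW survival estimator `S̃_IPCW(t) = (1/n) ∑_i D_i 1{X_i > t} / K̂(X_i−)`. -/
def SIPCW {n : ℕ} (X : Fin n → ℝ) (D : Fin n → Bool) (t : ℝ) : ℝ :=
  (1 / (n : ℝ)) * ∑ i : Fin n,
    (if D i = true then (1 : ℝ) else 0) * (if t < X i then (1 : ℝ) else 0) / Kminus X D (X i)

/-- RTTR jump weight `J(v) = 1/(n · K̂(v−))`. -/
def Jw {n : ℕ} (X : Fin n → ℝ) (D : Fin n → Bool) (v : ℝ) : ℝ :=
  1 / ((n : ℝ) * Kminus X D v)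

/-- Redistribute-to-the-right estimator
`Ŝ_RTTR(t) = 1 − ∑_{v ≤ t} [J(v) ΔN(v) 1{v < τ} + J(τ) Y(τ) 1{v = τ}]`. -/
def SRTTR {n : ℕ} (X : Fin n → ℝ) (D : Fin n → Bool) (t : ℝ) : ℝ :=
  1 - ∑ v ∈ (times X).filter (fun v => v ≤ t),
      (Jw X D v * dN X D v * (if v < tau X then (1 : ℝ) else 0)
        + Jw X D (tau X) * Yat X (tau X) * (if v = tau X then (1 : ℝ) else 0))

section

variable {n : ℕ} (X : Fin n → ℝ) (D : Fin n → Bool)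

lemma mem_times {u : ℝ} : u ∈ times X ↔ ∃ i, X i = u := by
  simp [times]

lemma Yat_pos {u : ℝ} (hu : u ∈ times X) : 0 < Yat X u := by
  obtain ⟨i, rfl⟩ := (mem_times X).1 hu
  unfold Yat
  exact_mod_cast Finset.card_pos.2 ⟨i, by simp⟩

lemma Yat_eq_Yplus_add_dN_add_dC (u : ℝ) : Yat X u = Yplus X u + dN X D u + dC X D u := by
  simp only [Yat, Yplus, dN, dC, ← sum_boole, ← sum_add_distrib]
  refine sum_congr rfl fun i _ => ?_
  rcases lt_trichotomy u (X i) with h | rfl | h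
  · simp [h.le, h, h.ne']
  · cases D i <;> simp
  · simp [h.not_ge, h.not_gt, h.ne]

lemma one_sub_dN_div_mul_one_sub_dC_div {u : ℝ} (hu : u ∈ times X) :
    (1 - dN X D u / Yat X u) * (1 - dC X D u / Ydag X D u) = Yplus X u / Yat X u := by
  have hY := (Yat_pos X hu).ne'
  have hsplit := Yat_eq_Yplus_add_dN_add_dC X D u
  have hYplus : 0 ≤ Yplus X u := Nat.cast_nonneg _
  have hdC : 0 ≤ dC X D u := Nat.cast_nonneg _
  unfold Ydag
  by_cases hdag : Yat X u - dN X D u = 0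
  -- `Y†(u) = Y(u+) + ΔC(u)`, so its vanishing makes the `0/0` junk value harmless.
  · have hYplus0 : Yplus X u = 0 := by linarith
    have hdN : dN X D u = Yat X u := by linarith
    rw [hYplus0, hdN, div_self hY]
    simp
  · field_simp
    linear_combination hsplit

lemma filter_lt_eq_of_filter_lt_eq_insert {a v : ℝ} {s : Finset ℝ}
    (h : (times X).filter (fun u => u < v) = insert a s) (hs : ∀ x ∈ s, x < a) :
    (times X).filter (fun u => u < a) = s := by
  have ha : a ∈ (times X).filter (fun u => u < v) := h ▸ mem_insert_self a s
  have hav : a < v := (mem_filter.1 ha).2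
  ext u
  constructor
  · intro hu
    obtain ⟨hut, hua⟩ := mem_filter.1 hu
    have : u ∈ insert a s := h ▸ mem_filter.2 ⟨hut, hua.trans hav⟩
    exact (mem_insert.1 this).resolve_left hua.ne
  · intro hu
    have : u ∈ (times X).filter (fun u => u < v) := h ▸ mem_insert_of_mem hu
    exact mem_filter.2 ⟨(mem_filter.1 this).1, hs u hu⟩

lemma Yplus_eq_Yat_of_filter_lt_eq_insert {a v : ℝ} {s : Finset ℝ}
    (h : (times X).filter (fun u => u < v) = insert a s) (hs : ∀ x ∈ s, x < a) :
    Yplus X a = Yat X v := by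
  have ha : a ∈ (times X).filter (fun u => u < v) := h ▸ mem_insert_self a s
  have hav : a < v := (mem_filter.1 ha).2
  unfold Yplus Yat
  congr 2
  refine filter_congr fun i _ => ⟨fun hai => ?_, hav.trans_le⟩
  by_contra! hiv
  have : X i ∈ insert a s := h ▸ mem_filter.2 ⟨(mem_times X).2 ⟨i, rfl⟩, hiv⟩
  rcases mem_insert.1 this with hia | his
  · exact hai.ne' hia
  · exact (hs _ his).not_gt hai

lemma Yat_eq_of_filter_lt_eq_empty {v : ℝ} (h : (times X).filter (fun u => u < v) = ∅) :
    Yat X v = n := by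
  unfold Yat
  rw [filter_true_of_mem fun i _ => ?_, card_univ, Fintype.card_fin]
  by_contra! hiv
  have : X i ∈ (times X).filter (fun u => u < v) :=
    mem_filter.2 ⟨(mem_times X).2 ⟨i, rfl⟩, hiv⟩
  simp [h] at this

theorem natCast_mul_SPLminus_mul_Kminus (v : ℝ) :
    n * (SPLminus X D v * Kminus X D v) = Yat X v := by
  suffices key : ∀ s v, (times X).filter (fun u => u < v) = s →
      n * ∏ u ∈ s, Yplus X u / Yat X u = Yat X v by
    rw [SPLminus, Kminus, ← prod_mul_distrib,
      prod_congr rfl fun u hu => one_sub_dN_div_mul_one_sub_dC_div X D (mem_filter.1 hu).1]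
    exact key _ v rfl
  intro s
  induction s using Finset.induction_on_max with
  | empty => intro v h; simp [Yat_eq_of_filter_lt_eq_empty X h]
  | insert a s hs ih =>
    intro v h
    have ha : a ∈ times X := (mem_filter.1 (h ▸ mem_insert_self a s)).1
    rw [prod_insert fun has => lt_irrefl a (hs a has), mul_left_comm,
      ih a (filter_lt_eq_of_filter_lt_eq_insert X h hs),
      div_mul_cancel₀ _ (Yat_pos X ha).ne', Yplus_eq_Yat_of_filter_lt_eq_insert X h hs]

theorem one_sub_SPL (t : ℝ) :
    1 - SPL X D t =
      ∑ u ∈ (times X).filter (fun u => u ≤ t), dN X D u / Yat X u * SPLminus X D u := by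
  rw [SPL, prod_one_sub_ordered, sub_sub_cancel]
  refine sum_congr rfl fun u hu => ?_
  rw [filter_filter, SPLminus,
    filter_congr fun w _ => and_iff_right_of_imp fun hw => hw.le.trans (mem_filter.1 hu).2]

theorem FIPCW_eq_sum (t : ℝ) :
    FIPCW X D t = ∑ u ∈ (times X).filter (fun u => u ≤ t), dN X D u / (n * Kminus X D u) := by
  rw [sum_filter, FIPCW, mul_sum]
  refine (sum_image' _ fun i _ => ?_).symm
  have hdN : dN X D (X i) = ∑ j ∈ univ with X j = X i, if D j = true then (1 : ℝ) else 0 := by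
    rw [sum_boole, filter_filter]
    rfl
  rw [hdN]
  split_ifs with hit
  · rw [sum_div]
    refine sum_congr rfl fun j hj => ?_
    rw [(mem_filter.1 hj).2, if_pos hit]
    ring
  · exact (sum_eq_zero fun j hj => by rw [(mem_filter.1 hj).2, if_neg hit]; ring).symm

end

theorem stmt10_general (n : ℕ) (X : Fin n → ℝ) (D : Fin n → Bool) :
    ∀ t : ℝ, 0 ≤ t → 1 - SPL X D t = FIPCW X D t := by
  intro t _
  rw [one_sub_SPL, FIPCW_eq_sum]
  refine sum_congr rfl fun u hu => ?_
  have hY := Yat_pos X (mem_filter.1 hu).1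
  rw [← natCast_mul_SPLminus_mul_Kminus X D u] at hY ⊢
  have hn : (n : ℝ) ≠ 0 := by rintro h; simp [h] at hY
  have hS : SPLminus X D u ≠ 0 := by rintro h; simp [h] at hY
  have hK : Kminus X D u ≠ 0 := by rintro h; simp [h] at hY
  field_simp

/-- product-limit = IPCW for the distribution function: for every
`t ≥ 0`, `1 − Ŝ_PL(t) = F̂_IPCW(t)`. -/
theorem stmt10 (n : ℕ) (hn : 0 < n) (X : Fin n → ℝ) (D : Fin n → Bool)
    (hX : ∀ i, 0 < X i) :
    ∀ t : ℝ, 0 ≤ t → 1 - SPL X D t = FIPCW X D t :=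
  stmt10_general n X D

end SurvStmt
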